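/- arXiv:2503.15747 — 2 statements merged into one kernel-verified Lean document; each statement's English description precedes it below -/
import Mathlib

section
/- For every positive integer k, every path in T_k has eccentricity at least k, i.e., for every path P in T_k there exists a vertex of T_k at distance at least k from every vertex of P. -/
open SimpleGraph

/-- The `k`-subdivided claw `S_k`: a center vertex (`none`) with three pendant
paths of length `k` attached. Vertex `some (i, j)` is the `(j+1)`-st vertex on arm `i`. -/
def subClaw (k : ℕ) : SimpleGraph (Option (Fin 3 × Fin k)) :=
  SimpleGraph.fromRel fun a b =>
    match a, b with
    | none, some p => (p.2 : ℕ) = 0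
    | some p, some q => p.1 = q.1 ∧ (q.2 : ℕ) = (p.2 : ℕ) + 1
    | _, _ => False

/-- The `k`-subdivided net `T_k`: a triangle on the vertices `(i, 0)` with a pendant
path of length `k` attached to each triangle vertex. -/
def subNet (k : ℕ) : SimpleGraph (Fin 3 × Fin (k + 1)) :=
  SimpleGraph.fromRel fun a b =>
    ((a.2 : ℕ) = 0 ∧ (b.2 : ℕ) = 0 ∧ a.1 ≠ b.1) ∨ (a.1 = b.1 ∧ (b.2 : ℕ) = (a.2 : ℕ) + 1)

/-- `3P_k`: the disjoint union of three paths on `k` vertices. -/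
def threePath (k : ℕ) : SimpleGraph (Fin 3 × Fin k) :=
  SimpleGraph.fromRel fun a b => a.1 = b.1 ∧ (b.2 : ℕ) = (a.2 : ℕ) + 1

/-- Disjoint union of two simple graphs. -/
def disjSum {α β : Type*} (G : SimpleGraph α) (H : SimpleGraph β) : SimpleGraph (α ⊕ β) :=
  SimpleGraph.fromRel fun a b =>
    match a, b with
    | Sum.inl x, Sum.inl y => G.Adj x y
    | Sum.inr x, Sum.inr y => H.Adj x y
    | _, _ => False

/-- `H` is (isomorphic to) an induced subgraph of `G`. -/
def IsInducedSubgraph {α β : Type*} (H : SimpleGraph α) (G : SimpleGraph β) : Prop :=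
  Nonempty (H ↪g G)

/-- `G` is `{S_k, T_k}`-free. -/
def SkTkFree {V : Type*} (k : ℕ) (G : SimpleGraph V) : Prop :=
  ¬ IsInducedSubgraph (subClaw k) G ∧ ¬ IsInducedSubgraph (subNet k) G

/-- `G` has a path of eccentricity at most `k`. -/
def HasPathEccLE {V : Type*} (G : SimpleGraph V) (k : ℕ) : Prop :=
  ∃ (u v : V) (p : G.Walk u v), p.IsPath ∧ ∀ x : V, ∃ y ∈ p.support, G.dist x y ≤ k

/-!
Choose an arm `i` of `T_k` containing neither endpoint of the path. The interior of that arm is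
joined to the rest of the graph by a single edge, so a path (indeed a trail) that entered it could
not leave it again; hence the path avoids it. The function equal to `k - j` at `(i, j)` and to `k`
off arm `i` changes by at most one along each edge and vanishes at the tip `(i, k)`, so the tip is
at distance at least `k` from every vertex outside the interior of arm `i`.
-/

namespace SimpleGraph

variable {V : Type*} {G : SimpleGraph V} {u v : V}

lemma Walk.IsTrail.notMem_of_boundary_edge_eq {S : Set V} {e : Sym2 V}
    (hS : ∀ a b, G.Adj a b → a ∈ S → b ∉ S → s(a, b) = e) {p : G.Walk u v} (hp : p.IsTrail)
    (hu : u ∉ S) (hv : v ∉ S) {w : V} (hw : w ∈ p.support) : w ∉ S := by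
  classical
  intro hwS
  have mem_edges_of_exit : ∀ {x y : V} (q : G.Walk x y), x ∈ S → y ∉ S → e ∈ q.edges := by
    intro x y q hx hy
    obtain ⟨d, hd, hdS, hdS'⟩ := q.exists_boundary_dart S hx hy
    rw [← hS _ _ d.adj hdS hdS']
    exact List.mem_map_of_mem hd
  have hfirst : e ∈ (p.takeUntil w hw).edges := by
    simpa [Walk.edges_reverse] using mem_edges_of_exit (p.takeUntil w hw).reverse hwS hu
  exact hp.disjoint_edges_takeUntil_dropUntil hw hfirst
    (mem_edges_of_exit (p.dropUntil w hw) hwS hv)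

lemma Walk.le_add_length_of_adj {f : V → ℕ} (hf : ∀ a b, G.Adj a b → f b ≤ f a + 1)
    (p : G.Walk u v) : f v ≤ f u + p.length := by
  induction p with
  | nil => simp
  | cons h _ ih =>
    rw [Walk.length_cons]
    have := hf _ _ h
    omega

lemma Reachable.le_add_dist_of_adj {f : V → ℕ} (hf : ∀ a b, G.Adj a b → f b ≤ f a + 1)
    (h : G.Reachable u v) : f v ≤ f u + G.dist u v := by
  obtain ⟨p, hp⟩ := h.exists_walk_length_eq_dist
  exact hp ▸ p.le_add_length_of_adj hf

end SimpleGraph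

section SubNet

variable {k : ℕ}

def armInterior (k : ℕ) (i : Fin 3) : Set (Fin 3 × Fin (k + 1)) := {a | a.1 = i ∧ a.2 ≠ 0}

-- For `k = 0` the literal `(1 : Fin 1)` is `0`; harmless, as `armInterior 0 i` is empty.
lemma subNet_adj_armInterior_boundary {i : Fin 3} {a b : Fin 3 × Fin (k + 1)}
    (h : (subNet k).Adj a b) (ha : a ∈ armInterior k i) (hb : b ∉ armInterior k i) :
    s(a, b) = s((i, 1), (i, 0)) := by
  obtain ⟨a1, a2⟩ := a
  obtain ⟨b1, b2⟩ := b
  simp only [armInterior, Set.mem_ofPred_eq, not_and, ne_eq, Decidable.not_not] at ha hb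
  obtain ⟨rfl, ha2⟩ := ha
  rw [subNet, fromRel_adj] at h
  simp only [Fin.val_eq_zero_iff, ha2, false_and, false_or, ne_eq] at h
  rcases h with ⟨-, ⟨rfl, h⟩ | ⟨-, h⟩ | ⟨rfl, h⟩⟩
  · simp [hb rfl] at h
  · exact h.elim
  · obtain rfl := hb rfl
    have ha1 : a2 = 1 := Fin.ext <| by
      rw [Fin.val_one', Nat.mod_eq_of_lt (by omega)]
      simpa using h
    rw [ha1]

def tipPotential (k : ℕ) (i : Fin 3) (a : Fin 3 × Fin (k + 1)) : ℕ :=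
  if a.1 = i then k - a.2 else k

lemma tipPotential_le_of_adj (i : Fin 3) (a b : Fin 3 × Fin (k + 1)) (h : (subNet k).Adj a b) :
    tipPotential k i b ≤ tipPotential k i a + 1 := by
  rw [subNet, fromRel_adj] at h
  unfold tipPotential
  split_ifs <;> grind

lemma tipPotential_last (i : Fin 3) : tipPotential k i (i, Fin.last k) = 0 := by
  simp [tipPotential]

lemma tipPotential_of_notMem_armInterior {i : Fin 3} {a : Fin 3 × Fin (k + 1)}
    (ha : a ∉ armInterior k i) : tipPotential k i a = k := by
  simp only [armInterior, Set.mem_ofPred_eq, not_and, not_not] at ha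
  unfold tipPotential
  split_ifs with h
  · simp [ha h]
  · rfl

lemma subNet_reachable_base (i : Fin 3) (j : Fin (k + 1)) : (subNet k).Reachable (i, j) (i, 0) := by
  induction j using Fin.induction with
  | zero => rfl
  | succ j ih =>
    refine (Adj.reachable ?_).trans ih
    rw [subNet, fromRel_adj]
    simp [Prod.ext_iff, Fin.ext_iff]

lemma subNet_connected : (subNet k).Connected := by
  refine Connected.mk fun a b => (subNet_reachable_base a.1 a.2).trans
    (Reachable.trans ?_ (subNet_reachable_base b.1 b.2).symm)
  by_cases h : a.1 = b.1
  · rw [h]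
  · refine Adj.reachable ?_
    rw [subNet, fromRel_adj]
    simp [Prod.ext_iff, h]

end SubNet

theorem stmt3_general (k : ℕ)
    (u v : Fin 3 × Fin (k + 1)) (p : (subNet k).Walk u v) (hp : p.IsPath) :
    ∃ x, ∀ y ∈ p.support, k ≤ (subNet k).dist x y := by
  obtain ⟨i, hiu, hiv⟩ : ∃ i : Fin 3, i ≠ u.1 ∧ i ≠ v.1 :=
    (show ∀ a b : Fin 3, ∃ c, c ≠ a ∧ c ≠ b by decide) u.1 v.1
  refine ⟨(i, Fin.last k), fun y hy => ?_⟩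
  have hyS : y ∉ armInterior k i :=
    hp.isTrail.notMem_of_boundary_edge_eq (fun _ _ => subNet_adj_armInterior_boundary)
      (fun h => hiu h.1.symm) (fun h => hiv h.1.symm) hy
  have hpot := (subNet_connected.preconnected (i, Fin.last k) y).le_add_dist_of_adj
    (tipPotential_le_of_adj i)
  rw [tipPotential_last, tipPotential_of_notMem_armInterior hyS] at hpot
  omega

/-- For every positive integer `k`, every path in `T_k` has eccentricity at least `k`:
some vertex is at distance at least `k` from every vertex of the path. -/
theorem stmt3 (k : ℕ) (hk : 1 ≤ k)
    (u v : Fin 3 × Fin (k + 1)) (p : (subNet k).Walk u v) (hp : p.IsPath) :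
    ∃ x, ∀ y ∈ p.support, k ≤ (subNet k).dist x y :=
  stmt3_general k u v p hp
end

section
/- Let k ≥ 1 and let H be a graph. Then H is an induced subgraph of both S_k and T_k if and only if H is an induced subgraph of the disjoint union 3P_k of three paths on k vertices, or an induced subgraph of the disjoint union P_{2k+1} + P_{k-1}. -/
/-!
An induced copy of `H` in `S_k` that misses the centre lies in `S_k - centre = 3P_k`. One that
misses the first vertex of some arm lies, after permuting the arms, in `S_k` minus that vertex,
which is `P_{2k+1} + P_{k-1}`. Otherwise the copy contains the centre together with its three
neighbours, an induced claw `K_{1,3}`; but `T_k` is claw-free, since the neighbourhood of every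
vertex is covered by two cliques. Conversely `3P_k` and `P_{2k+1} + P_{k-1}` embed in both graphs.
-/

open SimpleGraph

namespace SimpleGraph

variable {U V W : Type*} {G : SimpleGraph V} {H : SimpleGraph W} {A : SimpleGraph U}

theorem Embedding.isIndContained_of_range_subset (f : H ↪g G) (e : A ↪g G)
    (h : Set.range f ⊆ Set.range e) : H ⊴ A :=
  ⟨e.isoInduceRange.symm.toEmbedding.comp ((G.induceHomOfLE h).comp f.isoInduceRange.toEmbedding)⟩

end SimpleGraph

theorem disjSum_eq_sum {α β : Type*} (G : SimpleGraph α) (H : SimpleGraph β) :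
    disjSum G H = G ⊕g H := by
  ext (x | x) (y | y) <;> simp only [disjSum, fromRel_adj, sum_adj]
  · exact ⟨fun h => h.2.elim id G.adj_symm, fun h => ⟨by simpa using G.ne_of_adj h, .inl h⟩⟩
  · simp
  · simp
  · exact ⟨fun h => h.2.elim id H.adj_symm, fun h => ⟨by simpa using H.ne_of_adj h, .inl h⟩⟩

section Adjacency

variable {k : ℕ}

@[simp]
theorem subClaw_adj_none_some (p : Fin 3 × Fin k) :
    (subClaw k).Adj none (some p) ↔ (p.2 : ℕ) = 0 := by
  simp [subClaw, fromRel_adj]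

@[simp]
theorem subClaw_adj_some_none (p : Fin 3 × Fin k) :
    (subClaw k).Adj (some p) none ↔ (p.2 : ℕ) = 0 := by
  simp [subClaw, fromRel_adj]

@[simp]
theorem subClaw_adj_some_some (p q : Fin 3 × Fin k) :
    (subClaw k).Adj (some p) (some q) ↔
      p.1 = q.1 ∧ ((q.2 : ℕ) = p.2 + 1 ∨ (p.2 : ℕ) = q.2 + 1) := by
  simp only [subClaw, fromRel_adj, ne_eq, Option.some.injEq, Prod.ext_iff, Fin.ext_iff]
  omega

theorem subNet_adj (a b : Fin 3 × Fin (k + 1)) :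
    (subNet k).Adj a b ↔
      ((a.2 : ℕ) = 0 ∧ (b.2 : ℕ) = 0 ∧ a.1 ≠ b.1) ∨
        (a.1 = b.1 ∧ ((b.2 : ℕ) = a.2 + 1 ∨ (a.2 : ℕ) = b.2 + 1)) := by
  simp only [subNet, fromRel_adj, ne_eq, Prod.ext_iff, Fin.ext_iff]
  omega

theorem threePath_adj (p q : Fin 3 × Fin k) :
    (threePath k).Adj p q ↔ p.1 = q.1 ∧ ((q.2 : ℕ) = p.2 + 1 ∨ (p.2 : ℕ) = q.2 + 1) := by
  simp only [threePath, fromRel_adj, ne_eq, Prod.ext_iff, Fin.ext_iff]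
  omega

end Adjacency

section Embeddings

variable (k : ℕ)

def threePathToSubClaw : threePath k ↪g subClaw k where
  toFun := some
  inj' := Option.some_injective _
  map_rel_iff' {p q} := by simp [threePath_adj]

def threePathToSubNet : threePath k ↪g subNet k where
  toFun p := (p.1, p.2.succ)
  inj' p q h := by simpa [Prod.ext_iff] using h
  map_rel_iff' {p q} := by
    change (subNet k).Adj (p.1, p.2.succ) (q.1, q.2.succ) ↔ _
    simp [subNet_adj, threePath_adj]

-- `P_{2k+1}` runs from the end of arm 0 through the centre to the end of arm 1;
-- `P_{k-1}` is arm 2 without its first vertex.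
def pathSumToSubClawFun : Fin (2 * k + 1) ⊕ Fin (k - 1) → Option (Fin 3 × Fin k)
  | .inl m =>
    if h : (m : ℕ) < k then some (0, ⟨k - 1 - m, by omega⟩)
    else if h' : (m : ℕ) = k then none
    else some (1, ⟨m - k - 1, by have := m.isLt; omega⟩)
  | .inr m => some (2, ⟨m + 1, by have := m.isLt; omega⟩)

theorem pathSumToSubClawFun_injective : Function.Injective (pathSumToSubClawFun k) := by
  rintro (m | m) (m' | m') h <;> simp only [pathSumToSubClawFun] at h <;> (try split_ifs at h) <;>
    simp_all [Prod.ext_iff, Fin.ext_iff] <;> omega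

theorem subClaw_adj_pathSumToSubClawFun (a b : Fin (2 * k + 1) ⊕ Fin (k - 1)) :
    (subClaw k).Adj (pathSumToSubClawFun k a) (pathSumToSubClawFun k b) ↔
      (pathGraph (2 * k + 1) ⊕g pathGraph (k - 1)).Adj a b := by
  rcases a with m | m <;> rcases b with m' | m' <;> simp only [pathSumToSubClawFun] <;>
    (try split_ifs) <;> simp_all [pathGraph_adj, Fin.ext_iff] <;> omega

def pathSumToSubClaw : pathGraph (2 * k + 1) ⊕g pathGraph (k - 1) ↪g subClaw k where
  toFun := pathSumToSubClawFun k
  inj' := pathSumToSubClawFun_injective k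
  map_rel_iff' := subClaw_adj_pathSumToSubClawFun k _ _

-- `P_{2k+1}` runs from the end of arm 0 across the triangle edge into arm 1;
-- `P_{k-1}` lies inside arm 2, off the triangle.
def pathSumToSubNetFun : Fin (2 * k + 1) ⊕ Fin (k - 1) → Fin 3 × Fin (k + 1)
  | .inl m =>
    if h : (m : ℕ) ≤ k then (0, ⟨k - m, by omega⟩)
    else (1, ⟨m - k - 1, by have := m.isLt; omega⟩)
  | .inr m => (2, ⟨m + 1, by have := m.isLt; omega⟩)

theorem pathSumToSubNetFun_injective : Function.Injective (pathSumToSubNetFun k) := by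
  rintro (m | m) (m' | m') h <;> simp only [pathSumToSubNetFun] at h <;> (try split_ifs at h) <;>
    simp_all [Prod.ext_iff, Fin.ext_iff] <;> omega

theorem subNet_adj_pathSumToSubNetFun (a b : Fin (2 * k + 1) ⊕ Fin (k - 1)) :
    (subNet k).Adj (pathSumToSubNetFun k a) (pathSumToSubNetFun k b) ↔
      (pathGraph (2 * k + 1) ⊕g pathGraph (k - 1)).Adj a b := by
  rcases a with m | m <;> rcases b with m' | m' <;> simp only [pathSumToSubNetFun] <;>
    (try split_ifs) <;> simp_all [subNet_adj, pathGraph_adj, Fin.ext_iff] <;> omega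

def pathSumToSubNet : pathGraph (2 * k + 1) ⊕g pathGraph (k - 1) ↪g subNet k where
  toFun := pathSumToSubNetFun k
  inj' := pathSumToSubNetFun_injective k
  map_rel_iff' := subNet_adj_pathSumToSubNetFun k _ _

end Embeddings

theorem subNet_adj_or_adj_or_adj {k : ℕ} {v a b c : Fin 3 × Fin (k + 1)}
    (ha : (subNet k).Adj v a) (hb : (subNet k).Adj v b) (hc : (subNet k).Adj v c)
    (hab : a ≠ b) (hac : a ≠ c) (hbc : b ≠ c) :
    (subNet k).Adj a b ∨ (subNet k).Adj a c ∨ (subNet k).Adj b c := by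
  by_contra! h
  obtain ⟨nab, nac, nbc⟩ := h
  simp only [subNet_adj, ne_eq, Prod.ext_iff, Fin.ext_iff, not_or, not_and] at *
  rcases ha with ha | ha <;> rcases hb with hb | hb <;> rcases hc with hc | hc <;> omega

section Claw

variable (k : ℕ)

def clawToSubClaw (hk : 0 < k) : starGraph (none : Option (Fin 3)) ↪g subClaw k where
  toFun := Option.map (·, ⟨0, hk⟩)
  inj' := Option.map_injective fun i j h => by simpa using h
  map_rel_iff' {a b} := by rcases a with _ | i <;> rcases b with _ | j <;> simp

theorem subNet_clawFree : ¬ starGraph (none : Option (Fin 3)) ⊴ subNet k := by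
  rintro ⟨e⟩
  have hadj (i : Fin 3) : (subNet k).Adj (e none) (e (some i)) := e.map_rel_iff.2 (by simp)
  have hnadj {i j : Fin 3} (hij : i ≠ j) : ¬ (subNet k).Adj (e (some i)) (e (some j)) := by
    rw [e.map_rel_iff]; simp
  have hne {i j : Fin 3} (hij : i ≠ j) : e (some i) ≠ e (some j) := by simpa using hij
  rcases subNet_adj_or_adj_or_adj (hadj 0) (hadj 1) (hadj 2) (hne (by decide)) (hne (by decide))
    (hne (by decide)) with h | h | h
  all_goals exact hnadj (by decide) h

def clawPerm (σ : Equiv.Perm (Fin 3)) : subClaw k ≃g subClaw k where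
  toEquiv := Equiv.optionCongr (σ.prodCongr (Equiv.refl (Fin k)))
  map_rel_iff' {a b} := by
    rcases a with _ | ⟨i, j⟩ <;> rcases b with _ | ⟨i', j'⟩ <;> simp [σ.injective.eq_iff]

-- A set rather than the vertex `some (i, 0)`, so that it makes sense (and is empty) for `k = 0`.
def clawArmStart (i : Fin 3) : Set (Option (Fin 3 × Fin k)) :=
  {x | ∃ j : Fin k, (j : ℕ) = 0 ∧ x = some (i, j)}

theorem clawPerm_mem_clawArmStart (σ : Equiv.Perm (Fin 3)) (i : Fin 3)
    (x : Option (Fin 3 × Fin k)) :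
    clawPerm k σ x ∈ clawArmStart k (σ i) ↔ x ∈ clawArmStart k i := by
  rcases x with _ | ⟨i', j⟩ <;> simp [clawPerm, clawArmStart, σ.injective.eq_iff]

theorem compl_clawArmStart_subset_range :
    (clawArmStart k 2)ᶜ ⊆ Set.range (pathSumToSubClawFun k) := by
  rintro (_ | ⟨i, j⟩) hx
  · exact ⟨.inl ⟨k, by omega⟩, by simp [pathSumToSubClawFun]⟩
  · have hj := j.isLt
    fin_cases i
    · refine ⟨.inl ⟨k - 1 - j, by omega⟩, ?_⟩
      rw [pathSumToSubClawFun, dif_pos (by dsimp only; omega)]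
      simp [Fin.ext_iff]; omega
    · refine ⟨.inl ⟨k + 1 + j, by omega⟩, ?_⟩
      rw [pathSumToSubClawFun, dif_neg (by dsimp only; omega), dif_neg (by dsimp only; omega)]
      simp [Fin.ext_iff]; omega
    · have hj0 : (j : ℕ) ≠ 0 := fun h => hx ⟨j, h, rfl⟩
      refine ⟨.inr ⟨j - 1, by omega⟩, ?_⟩
      rw [pathSumToSubClawFun]
      simp [Fin.ext_iff]; omega

end Claw

theorem isIndContained_threePath_or_pathSum_of_subClaw_subNet {W : Type*} {H : SimpleGraph W}
    {k : ℕ} (hS : H ⊴ subClaw k) (hT : H ⊴ subNet k) :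
    H ⊴ threePath k ∨ H ⊴ pathGraph (2 * k + 1) ⊕g pathGraph (k - 1) := by
  obtain ⟨f⟩ := hS
  by_cases hc : none ∈ Set.range f
  swap
  · refine .inl (f.isIndContained_of_range_subset (threePathToSubClaw k) ?_)
    rintro _ ⟨w, rfl⟩
    obtain ⟨p, hp⟩ := Option.ne_none_iff_exists.1 fun h => hc ⟨w, h⟩
    exact ⟨p, hp⟩
  by_cases ha : ∃ i, ∀ w, f w ∉ clawArmStart k i
  · obtain ⟨i, hi⟩ := ha
    let σ := Equiv.swap i 2
    refine .inr (((clawPerm k σ).toEmbedding.comp f).isIndContained_of_range_subset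
      (pathSumToSubClaw k) ?_)
    rintro _ ⟨w, rfl⟩
    apply compl_clawArmStart_subset_range k
    rw [← Equiv.swap_apply_left i 2]
    exact (clawPerm_mem_clawArmStart k σ i (f w)).not.2 (hi w)
  · push Not at ha
    have hk : 0 < k := by
      obtain ⟨_, j, -⟩ := ha 0
      exact j.pos
    refine absurd (IsIndContained.trans ?_ hT) (subNet_clawFree k)
    refine (clawToSubClaw k hk).isIndContained_of_range_subset f ?_
    rintro _ ⟨_ | i, rfl⟩
    · exact hc
    · obtain ⟨w, j, hj, hw⟩ := ha i
      exact ⟨w, by simp [clawToSubClaw, hw, Fin.ext_iff, hj]⟩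

theorem stmt4_general {W : Type} (k : ℕ) (H : SimpleGraph W) :
    (IsInducedSubgraph H (subClaw k) ∧ IsInducedSubgraph H (subNet k)) ↔
      (IsInducedSubgraph H (threePath k) ∨
        IsInducedSubgraph H (disjSum (pathGraph (2 * k + 1)) (pathGraph (k - 1)))) := by
  change (H ⊴ _ ∧ H ⊴ _) ↔ (H ⊴ _ ∨ H ⊴ _)
  rw [disjSum_eq_sum]
  constructor
  · rintro ⟨hS, hT⟩
    exact isIndContained_threePath_or_pathSum_of_subClaw_subNet hS hT
  · rintro (h | h)
    · exact ⟨h.trans ⟨threePathToSubClaw k⟩, h.trans ⟨threePathToSubNet k⟩⟩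
    · exact ⟨h.trans ⟨pathSumToSubClaw k⟩, h.trans ⟨pathSumToSubNet k⟩⟩

/-- `H` is an induced subgraph of both `S_k` and `T_k` iff `H` is an induced subgraph
of `3P_k` or of `P_{2k+1} + P_{k-1}`. -/
theorem stmt4 {W : Type} (k : ℕ) (hk : 1 ≤ k) (H : SimpleGraph W) :
    (IsInducedSubgraph H (subClaw k) ∧ IsInducedSubgraph H (subNet k)) ↔
      (IsInducedSubgraph H (threePath k) ∨
        IsInducedSubgraph H (disjSum (pathGraph (2 * k + 1)) (pathGraph (k - 1)))) :=
  stmt4_general k H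
end
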